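/- arXiv:1603.00666 — 5 statements merged into one kernel-verified Lean document; each statement's English description precedes it below -/
import Mathlib

section
/- Let W be a real vector space, w1,w2,w3,w4 ∈ W, and for t ∈ [0,1] define w1(t)=(1−t)w1+t·w2, w2(t)=(1−t)w2+t·w3, w3(t)=(1−t)w3+t·w1, w4(t)=w4. If the span of {w1,w2,w3,w4} has dimension ≥ 3, then for every t ∈ [0,1] the span of {w1(t),w2(t),w3(t),w4(t)} has dimension ≥ 3. -/
theorem rank_ge_three_cyclic_homotopy (W : Type*) [AddCommGroup W] [Module ℝ W]
    [FiniteDimensional ℝ W] (w1 w2 w3 w4 : W)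
    (h : 3 ≤ Module.finrank ℝ (Submodule.span ℝ {w1, w2, w3, w4})) :
    ∀ t ∈ Set.Icc (0:ℝ) 1,
      3 ≤ Module.finrank ℝ (Submodule.span ℝ
        {(1 - t) • w1 + t • w2, (1 - t) • w2 + t • w3, (1 - t) • w3 + t • w1, w4}) := by
  rintro t ⟨ht0, ht1⟩
  have hd : ((1 - t) ^ 3 + t ^ 3) ≠ 0 := by nlinarith [sq_nonneg (t - 1/2)]
  have hspan : Submodule.span ℝ
      ({(1 - t) • w1 + t • w2, (1 - t) • w2 + t • w3, (1 - t) • w3 + t • w1, w4} : Set W)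
      = Submodule.span ℝ ({w1, w2, w3, w4} : Set W) := by
    have h1 : w1 ∈ Submodule.span ℝ ({w1, w2, w3, w4} : Set W) :=
      Submodule.subset_span (by simp)
    have h2 : w2 ∈ Submodule.span ℝ ({w1, w2, w3, w4} : Set W) :=
      Submodule.subset_span (by simp)
    have h3 : w3 ∈ Submodule.span ℝ ({w1, w2, w3, w4} : Set W) :=
      Submodule.subset_span (by simp)
    have h4 : w4 ∈ Submodule.span ℝ ({w1, w2, w3, w4} : Set W) :=
      Submodule.subset_span (by simp)
    have v1 : (1 - t) • w1 + t • w2 ∈ Submodule.span ℝ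
        ({(1 - t) • w1 + t • w2, (1 - t) • w2 + t • w3, (1 - t) • w3 + t • w1, w4} : Set W) :=
      Submodule.subset_span (by simp)
    have v2 : (1 - t) • w2 + t • w3 ∈ Submodule.span ℝ
        ({(1 - t) • w1 + t • w2, (1 - t) • w2 + t • w3, (1 - t) • w3 + t • w1, w4} : Set W) :=
      Submodule.subset_span (by simp)
    have v3 : (1 - t) • w3 + t • w1 ∈ Submodule.span ℝ
        ({(1 - t) • w1 + t • w2, (1 - t) • w2 + t • w3, (1 - t) • w3 + t • w1, w4} : Set W) :=
      Submodule.subset_span (by simp)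
    have v4 : w4 ∈ Submodule.span ℝ
        ({(1 - t) • w1 + t • w2, (1 - t) • w2 + t • w3, (1 - t) • w3 + t • w1, w4} : Set W) :=
      Submodule.subset_span (by simp)
    apply le_antisymm
    · rw [Submodule.span_le]
      rintro x hx
      simp only [Set.mem_insert_iff, Set.mem_singleton_iff] at hx
      rcases hx with rfl | rfl | rfl | rfl
      · exact add_mem (Submodule.smul_mem _ _ h1) (Submodule.smul_mem _ _ h2)
      · exact add_mem (Submodule.smul_mem _ _ h2) (Submodule.smul_mem _ _ h3)
      · exact add_mem (Submodule.smul_mem _ _ h3) (Submodule.smul_mem _ _ h1)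
      · exact h4
    · rw [Submodule.span_le]
      rintro x hx
      simp only [Set.mem_insert_iff, Set.mem_singleton_iff] at hx
      have key1 : ((1 - t) ^ 3 + t ^ 3) • w1 =
          (1 - t) ^ 2 • ((1 - t) • w1 + t • w2) - ((1 - t) * t) • ((1 - t) • w2 + t • w3)
            + t ^ 2 • ((1 - t) • w3 + t • w1) := by module
      have key2 : ((1 - t) ^ 3 + t ^ 3) • w2 =
          (1 - t) ^ 2 • ((1 - t) • w2 + t • w3) - ((1 - t) * t) • ((1 - t) • w3 + t • w1)
            + t ^ 2 • ((1 - t) • w1 + t • w2) := by module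
      have key3 : ((1 - t) ^ 3 + t ^ 3) • w3 =
          (1 - t) ^ 2 • ((1 - t) • w3 + t • w1) - ((1 - t) * t) • ((1 - t) • w1 + t • w2)
            + t ^ 2 • ((1 - t) • w2 + t • w3) := by module
      have m1 : w1 ∈ Submodule.span ℝ
          ({(1 - t) • w1 + t • w2, (1 - t) • w2 + t • w3, (1 - t) • w3 + t • w1, w4} : Set W) := by
        have hm : ((1 - t) ^ 3 + t ^ 3)⁻¹ • (((1 - t) ^ 3 + t ^ 3) • w1) ∈ Submodule.span ℝ
            ({(1 - t) • w1 + t • w2, (1 - t) • w2 + t • w3, (1 - t) • w3 + t • w1, w4} : Set W) := by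
          rw [key1]
          exact Submodule.smul_mem _ _ (add_mem (sub_mem (Submodule.smul_mem _ _ v1)
            (Submodule.smul_mem _ _ v2)) (Submodule.smul_mem _ _ v3))
        rwa [inv_smul_smul₀ hd] at hm
      have m2 : w2 ∈ Submodule.span ℝ
          ({(1 - t) • w1 + t • w2, (1 - t) • w2 + t • w3, (1 - t) • w3 + t • w1, w4} : Set W) := by
        have hm : ((1 - t) ^ 3 + t ^ 3)⁻¹ • (((1 - t) ^ 3 + t ^ 3) • w2) ∈ Submodule.span ℝ
            ({(1 - t) • w1 + t • w2, (1 - t) • w2 + t • w3, (1 - t) • w3 + t • w1, w4} : Set W) := by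
          rw [key2]
          exact Submodule.smul_mem _ _ (add_mem (sub_mem (Submodule.smul_mem _ _ v2)
            (Submodule.smul_mem _ _ v3)) (Submodule.smul_mem _ _ v1))
        rwa [inv_smul_smul₀ hd] at hm
      have m3 : w3 ∈ Submodule.span ℝ
          ({(1 - t) • w1 + t • w2, (1 - t) • w2 + t • w3, (1 - t) • w3 + t • w1, w4} : Set W) := by
        have hm : ((1 - t) ^ 3 + t ^ 3)⁻¹ • (((1 - t) ^ 3 + t ^ 3) • w3) ∈ Submodule.span ℝ
            ({(1 - t) • w1 + t • w2, (1 - t) • w2 + t • w3, (1 - t) • w3 + t • w1, w4} : Set W) := by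
          rw [key3]
          exact Submodule.smul_mem _ _ (add_mem (sub_mem (Submodule.smul_mem _ _ v3)
            (Submodule.smul_mem _ _ v1)) (Submodule.smul_mem _ _ v2))
        rwa [inv_smul_smul₀ hd] at hm
      rcases hx with rfl | rfl | rfl | rfl
      · exact m1
      · exact m2
      · exact m3
      · exact v4
  rw [hspan]
  exact h
end

section
/- Let W be a real vector space, w1,w2,w3,w4 ∈ W, and for t ∈ [0,1] define w1(t)=(1−t)w1+t·w2, w2(t)=(1−t)w2+t·w3, w3(t)=(1−t)w3+t·w1, w4(t)=w4. If the span of {w1,w2,w3,w4} has dimension ≥ 2, then for every t ∈ [0,1] the span of {w1(t),w2(t),w3(t),w4(t)} has dimension ≥ 2. -/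
theorem rank_ge_two_cyclic_homotopy (W : Type*) [AddCommGroup W] [Module ℝ W]
    [FiniteDimensional ℝ W] (w1 w2 w3 w4 : W)
    (h : 2 ≤ Module.finrank ℝ (Submodule.span ℝ {w1, w2, w3, w4})) :
    ∀ t ∈ Set.Icc (0:ℝ) 1,
      2 ≤ Module.finrank ℝ (Submodule.span ℝ
        {(1 - t) • w1 + t • w2, (1 - t) • w2 + t • w3, (1 - t) • w3 + t • w1, w4}) := by
  intro t ht
  obtain ⟨ht0, ht1⟩ := ht
  set v1 := (1 - t) • w1 + t • w2 with hv1
  set v2 := (1 - t) • w2 + t • w3 with hv2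
  set v3 := (1 - t) • w3 + t • w1 with hv3
  have hd : ((1 - t)^3 + t^3) ≠ 0 := by nlinarith [sq_nonneg (1 - 2*t), mul_nonneg ht0 (sub_nonneg.mpr ht1)]
  have hspan : Submodule.span ℝ ({v1, v2, v3, w4} : Set W)
      = Submodule.span ℝ ({w1, w2, w3, w4} : Set W) := by
    apply le_antisymm
    · rw [Submodule.span_le]
      have m1 : w1 ∈ Submodule.span ℝ ({w1, w2, w3, w4} : Set W) :=
        Submodule.subset_span (by simp)
      have m2 : w2 ∈ Submodule.span ℝ ({w1, w2, w3, w4} : Set W) :=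
        Submodule.subset_span (by simp)
      have m3 : w3 ∈ Submodule.span ℝ ({w1, w2, w3, w4} : Set W) :=
        Submodule.subset_span (by simp)
      have m4 : w4 ∈ Submodule.span ℝ ({w1, w2, w3, w4} : Set W) :=
        Submodule.subset_span (by simp)
      intro x hx
      simp only [Set.mem_insert_iff, Set.mem_singleton_iff] at hx
      rcases hx with rfl | rfl | rfl | rfl
      · exact Submodule.add_mem _ (Submodule.smul_mem _ _ m1) (Submodule.smul_mem _ _ m2)
      · exact Submodule.add_mem _ (Submodule.smul_mem _ _ m2) (Submodule.smul_mem _ _ m3)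
      · exact Submodule.add_mem _ (Submodule.smul_mem _ _ m3) (Submodule.smul_mem _ _ m1)
      · exact m4
    · rw [Submodule.span_le]
      have n1 : v1 ∈ Submodule.span ℝ ({v1, v2, v3, w4} : Set W) :=
        Submodule.subset_span (by simp)
      have n2 : v2 ∈ Submodule.span ℝ ({v1, v2, v3, w4} : Set W) :=
        Submodule.subset_span (by simp)
      have n3 : v3 ∈ Submodule.span ℝ ({v1, v2, v3, w4} : Set W) :=
        Submodule.subset_span (by simp)
      have n4 : w4 ∈ Submodule.span ℝ ({v1, v2, v3, w4} : Set W) :=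
        Submodule.subset_span (by simp)
      intro x hx
      simp only [Set.mem_insert_iff, Set.mem_singleton_iff] at hx
      have comb : ∀ a b c : W,
          a ∈ Submodule.span ℝ ({v1, v2, v3, w4} : Set W) →
          b ∈ Submodule.span ℝ ({v1, v2, v3, w4} : Set W) →
          c ∈ Submodule.span ℝ ({v1, v2, v3, w4} : Set W) →
          (1-t)^2 • a - ((1-t)*t) • b + t^2 • c ∈
            Submodule.span ℝ ({v1, v2, v3, w4} : Set W) := by
        intro a b c ha hb hc
        exact Submodule.add_mem _
          (Submodule.sub_mem _ (Submodule.smul_mem _ _ ha) (Submodule.smul_mem _ _ hb))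
          (Submodule.smul_mem _ _ hc)
      rcases hx with rfl | rfl | rfl | rfl
      · have key : ((1-t)^3 + t^3) • x = (1-t)^2 • v1 - ((1-t)*t) • v2 + t^2 • v3 := by
          rw [hv1, hv2, hv3]; module
        have := comb v1 v2 v3 n1 n2 n3
        rw [← key] at this
        exact (Submodule.smul_mem_iff _ hd).mp this
      · have key : ((1-t)^3 + t^3) • x = (1-t)^2 • v2 - ((1-t)*t) • v3 + t^2 • v1 := by
          rw [hv1, hv2, hv3]; module
        have := comb v2 v3 v1 n2 n3 n1
        rw [← key] at this
        exact (Submodule.smul_mem_iff _ hd).mp this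
      · have key : ((1-t)^3 + t^3) • x = (1-t)^2 • v3 - ((1-t)*t) • v1 + t^2 • v2 := by
          rw [hv1, hv2, hv3]; module
        have := comb v3 v1 v2 n3 n1 n2
        rw [← key] at this
        exact (Submodule.smul_mem_iff _ hd).mp this
      · exact n4
  rw [hspan]
  exact h
end

section
/- Let W be a real vector space, w1,w2,w3,w4 ∈ W, and for t ∈ [0,1] define the vectors w_i(t) by the 3-cyclic permutation homotopy (w1(t)=(1−t)w1+t·w2, w2(t)=(1−t)w2+t·w3, w3(t)=(1−t)w3+t·w1, w4(t)=w4). Then for each k ∈ {1,2,3,4}: the rank of (w1,w2,w3,w4) equals k if and only if the rank of (w1(t),w2(t),w3(t),w4(t)) equals k for every t ∈ [0,1]. -/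
/-!
The homotopy acts on `(w1, w2, w3)` by the circulant `(1 - t) I + t P`, with `P` the cyclic
shift, and fixes `w4`. Since `(aI + bP)(a²I - abP + b²P²) = (a³ + b³) I` and
`(1 - t)³ + t³ = 1 - 3t + 3t² > 0`, this is invertible for every real `t`, so the span, and
with it the rank, never changes.
-/

namespace Submodule

variable {K W : Type*} [Field K] [AddCommGroup W] [Module K W]

theorem mem_of_cyclic_combinations_mem {p : Submodule K W} {a b : K} (hab : a ^ 3 + b ^ 3 ≠ 0)
    {x y z : W} (hxy : a • x + b • y ∈ p) (hyz : a • y + b • z ∈ p) (hzx : a • z + b • x ∈ p) :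
    x ∈ p := by
  have hx : (a ^ 3 + b ^ 3) • x
      = a ^ 2 • (a • x + b • y) - (a * b) • (a • y + b • z) + b ^ 2 • (a • z + b • x) := by
    module
  rw [← smul_mem_iff p hab, hx]
  exact add_mem (sub_mem (smul_mem p _ hxy) (smul_mem p _ hyz)) (smul_mem p _ hzx)

theorem span_cyclic_combinations_eq {a b : K} (hab : a ^ 3 + b ^ 3 ≠ 0) (x y z w : W) :
    span K {a • x + b • y, a • y + b • z, a • z + b • x, w} = span K {x, y, z, w} := by
  apply le_antisymm
  · have hmem : ∀ u v : W, u ∈ span K {x, y, z, w} → v ∈ span K {x, y, z, w} →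
        a • u + b • v ∈ span K {x, y, z, w} := fun u v hu hv =>
      add_mem (smul_mem _ a hu) (smul_mem _ b hv)
    have hx : x ∈ span K {x, y, z, w} := subset_span (by simp)
    have hy : y ∈ span K {x, y, z, w} := subset_span (by simp)
    have hz : z ∈ span K {x, y, z, w} := subset_span (by simp)
    have hw : w ∈ span K {x, y, z, w} := subset_span (by simp)
    simp only [span_le, Set.insert_subset_iff, Set.singleton_subset_iff, SetLike.mem_coe]
    exact ⟨hmem x y hx hy, hmem y z hy hz, hmem z x hz hx, hw⟩
  · set p := span K {a • x + b • y, a • y + b • z, a • z + b • x, w}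
    have hxy : a • x + b • y ∈ p := subset_span (by simp)
    have hyz : a • y + b • z ∈ p := subset_span (by simp)
    have hzx : a • z + b • x ∈ p := subset_span (by simp)
    have hw : w ∈ p := subset_span (by simp)
    simp only [span_le, Set.insert_subset_iff, Set.singleton_subset_iff, SetLike.mem_coe]
    exact ⟨mem_of_cyclic_combinations_mem hab hxy hyz hzx,
      mem_of_cyclic_combinations_mem hab hyz hzx hxy,
      mem_of_cyclic_combinations_mem hab hzx hxy hyz, hw⟩

end Submodule

theorem one_sub_pow_three_add_pow_three_pos {K : Type*} [Field K] [LinearOrder K]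
    [IsStrictOrderedRing K] (t : K) : 0 < (1 - t) ^ 3 + t ^ 3 := by
  nlinarith [sq_nonneg (2 * t - 1)]

theorem rank_eq_iff_cyclic_homotopy_general (W : Type*) [AddCommGroup W] [Module ℝ W]
    (w1 w2 w3 w4 : W) (k : ℕ) :
    Module.finrank ℝ (Submodule.span ℝ {w1, w2, w3, w4}) = k ↔
      ∀ t ∈ Set.Icc (0:ℝ) 1,
        Module.finrank ℝ (Submodule.span ℝ
          {(1 - t) • w1 + t • w2, (1 - t) • w2 + t • w3, (1 - t) • w3 + t • w1, w4}) = k := by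
  have hspan (t : ℝ) := Submodule.span_cyclic_combinations_eq
    (one_sub_pow_three_add_pow_three_pos t).ne' w1 w2 w3 w4
  constructor
  · intro h t _
    rwa [hspan t]
  · intro h
    rw [← hspan 0]
    exact h 0 ⟨le_rfl, zero_le_one⟩

theorem rank_eq_iff_cyclic_homotopy (W : Type*) [AddCommGroup W] [Module ℝ W]
    [FiniteDimensional ℝ W] (w1 w2 w3 w4 : W) (k : ℕ) (hk : k ∈ Finset.Icc 1 4) :
    Module.finrank ℝ (Submodule.span ℝ {w1, w2, w3, w4}) = k ↔
      ∀ t ∈ Set.Icc (0:ℝ) 1,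
        Module.finrank ℝ (Submodule.span ℝ
          {(1 - t) • w1 + t • w2, (1 - t) • w2 + t • w3, (1 - t) • w3 + t • w1, w4}) = k :=
  rank_eq_iff_cyclic_homotopy_general W w1 w2 w3 w4 k
end

section
/- Let M be a 4×4 real matrix in block form [[A,B],[C,D]] with det(A) ≠ 0, and let M_ij for i,j ∈ {3,4} be the minors obtained by deleting row i and column j. Then the Jacobian determinant of (M44, M43, M34, M33) with respect to the variables (d11, d12, d21, d22) (the entries of D) equals det(A)^4. -/
/-- The 3×3 minor of a 4×4 matrix obtained by deleting row `i` and column `j`. -/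
def minor4 {R : Type*} [CommRing R] (M : Matrix (Fin 4) (Fin 4) R) (i j : Fin 4) : R :=
  (M.submatrix i.succAbove j.succAbove).det

lemma minor4_expand {R : Type*} [CommRing R] (M : Matrix (Fin 4) (Fin 4) R) (i j : Fin 4) :
    minor4 M i j =
      M (i.succAbove 0) (j.succAbove 0) * M (i.succAbove 1) (j.succAbove 1) * M (i.succAbove 2) (j.succAbove 2) -
      M (i.succAbove 0) (j.succAbove 0) * M (i.succAbove 1) (j.succAbove 2) * M (i.succAbove 2) (j.succAbove 1) -
      M (i.succAbove 0) (j.succAbove 1) * M (i.succAbove 1) (j.succAbove 0) * M (i.succAbove 2) (j.succAbove 2) +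
      M (i.succAbove 0) (j.succAbove 1) * M (i.succAbove 1) (j.succAbove 2) * M (i.succAbove 2) (j.succAbove 0) +
      M (i.succAbove 0) (j.succAbove 2) * M (i.succAbove 1) (j.succAbove 0) * M (i.succAbove 2) (j.succAbove 1) -
      M (i.succAbove 0) (j.succAbove 2) * M (i.succAbove 1) (j.succAbove 1) * M (i.succAbove 2) (j.succAbove 0) := by
  rw [minor4, Matrix.det_fin_three]
  simp only [Matrix.submatrix_apply]

theorem jacobian_of_minors_wrt_D
    (A B C : Matrix (Fin 2) (Fin 2) ℝ) (hA : A.det ≠ 0)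
    (f : (Fin 4 → ℝ) → (Fin 4 → ℝ))
    (hf : ∀ d : Fin 4 → ℝ,
      f d = ![minor4 !![A 0 0, A 0 1, B 0 0, B 0 1;
                        A 1 0, A 1 1, B 1 0, B 1 1;
                        C 0 0, C 0 1, d 0, d 1;
                        C 1 0, C 1 1, d 2, d 3] 3 3,
              minor4 !![A 0 0, A 0 1, B 0 0, B 0 1;
                        A 1 0, A 1 1, B 1 0, B 1 1;
                        C 0 0, C 0 1, d 0, d 1;
                        C 1 0, C 1 1, d 2, d 3] 3 2,
              minor4 !![A 0 0, A 0 1, B 0 0, B 0 1;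
                        A 1 0, A 1 1, B 1 0, B 1 1;
                        C 0 0, C 0 1, d 0, d 1;
                        C 1 0, C 1 1, d 2, d 3] 2 3,
              minor4 !![A 0 0, A 0 1, B 0 0, B 0 1;
                        A 1 0, A 1 1, B 1 0, B 1 1;
                        C 0 0, C 0 1, d 0, d 1;
                        C 1 0, C 1 1, d 2, d 3] 2 2]) :
    ∀ d : Fin 4 → ℝ,
      LinearMap.det ((fderiv ℝ f d : (Fin 4 → ℝ) →L[ℝ] (Fin 4 → ℝ)) :
        (Fin 4 → ℝ) →ₗ[ℝ] (Fin 4 → ℝ)) = A.det ^ 4 := by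
  have s30 : (3 : Fin 4).succAbove 0 = 0 := by decide
  have s31 : (3 : Fin 4).succAbove 1 = 1 := by decide
  have s32 : (3 : Fin 4).succAbove 2 = 2 := by decide
  have s20 : (2 : Fin 4).succAbove 0 = 0 := by decide
  have s21 : (2 : Fin 4).succAbove 1 = 1 := by decide
  have s22 : (2 : Fin 4).succAbove 2 = 3 := by decide
  have key : f = fun x => A.det • x + f 0 := by
    funext x i
    rw [hf, hf]
    fin_cases i <;>
      simp [minor4_expand, s30, s31, s32, s20, s21, s22, Matrix.det_fin_two,
        Pi.zero_apply, Fin.isValue, Matrix.vecHead, Matrix.vecTail] <;> ring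
  intro d
  have hdf : fderiv ℝ f d = A.det • ContinuousLinearMap.id ℝ (Fin 4 → ℝ) := by
    rw [key]
    exact (((A.det • ContinuousLinearMap.id ℝ (Fin 4 → ℝ)).hasFDerivAt).add_const (f 0)).fderiv
  rw [hdf]
  have : ((A.det • ContinuousLinearMap.id ℝ (Fin 4 → ℝ) :
      (Fin 4 → ℝ) →L[ℝ] (Fin 4 → ℝ)) : (Fin 4 → ℝ) →ₗ[ℝ] (Fin 4 → ℝ))
      = A.det • LinearMap.id := rfl
  rw [this, LinearMap.det_smul, LinearMap.det_id, mul_one]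
  simp
end

section
/- Let R be a commutative ring, let A, B, C, D be 2×2 matrices over R with det(A) invertible in R, and let M = [[A,B],[C,D]]. Then the ideal of R generated by all 3×3 minors of M is equal to the ideal generated by the four minors M_ij, i,j ∈ {3,4}, obtained by deleting one of the last two rows and one of the last two columns. -/
open Matrix Pointwise

namespace Matrix

variable {R : Type*} [CommRing R] {m n : Type*} [Fintype m] [DecidableEq m]
  [Fintype n] [DecidableEq n]

/-- The ideal of `(n - 1)`-minors of `M`: the entries of the adjugate are these minors up to sign. -/
def adjugateIdeal (M : Matrix n n R) : Ideal R :=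
  Ideal.span {r | ∃ i j, r = M.adjugate i j}

theorem adjugate_mem_adjugateIdeal (M : Matrix n n R) (i j : n) :
    M.adjugate i j ∈ M.adjugateIdeal :=
  Ideal.subset_span ⟨i, j, rfl⟩

theorem adjugateIdeal_mul_le_left (P M : Matrix n n R) :
    (P * M).adjugateIdeal ≤ M.adjugateIdeal := by
  refine Ideal.span_le.2 ?_
  rintro _ ⟨i, j, rfl⟩
  rw [adjugate_mul_distrib, mul_apply]
  exact Ideal.sum_mem _ fun k _ => Ideal.mul_mem_right _ _ (adjugate_mem_adjugateIdeal M i k)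

theorem adjugateIdeal_mul_le_right (M Q : Matrix n n R) :
    (M * Q).adjugateIdeal ≤ M.adjugateIdeal := by
  refine Ideal.span_le.2 ?_
  rintro _ ⟨i, j, rfl⟩
  rw [adjugate_mul_distrib, mul_apply]
  exact Ideal.sum_mem _ fun k _ => Ideal.mul_mem_left _ _ (adjugate_mem_adjugateIdeal M k j)

theorem adjugateIdeal_mul_of_isUnit_left {P : Matrix n n R} (hP : IsUnit P) (M : Matrix n n R) :
    (P * M).adjugateIdeal = M.adjugateIdeal := by
  obtain ⟨u, rfl⟩ := hP
  refine le_antisymm (adjugateIdeal_mul_le_left _ M) ?_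
  simpa [← Matrix.mul_assoc] using adjugateIdeal_mul_le_left ↑u⁻¹ ((u : Matrix n n R) * M)

theorem adjugateIdeal_mul_of_isUnit_right (M : Matrix n n R) {Q : Matrix n n R} (hQ : IsUnit Q) :
    (M * Q).adjugateIdeal = M.adjugateIdeal := by
  obtain ⟨u, rfl⟩ := hQ
  refine le_antisymm (adjugateIdeal_mul_le_right M _) ?_
  simpa [Matrix.mul_assoc] using adjugateIdeal_mul_le_right (M * (u : Matrix n n R)) ↑u⁻¹

theorem adjugateIdeal_reindex (e : m ≃ n) (M : Matrix m m R) :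
    (reindex e e M).adjugateIdeal = M.adjugateIdeal := by
  rw [adjugateIdeal, adjugateIdeal, adjugate_reindex]
  congr 1
  ext r
  simp only [reindex_apply, submatrix_apply, Set.mem_ofPred_eq]
  exact ⟨fun ⟨_, _, h⟩ => ⟨_, _, h⟩, fun ⟨i, j, h⟩ => ⟨e i, e j, by simpa using h⟩⟩

theorem adjugateIdeal_eq_span_det_submatrix {k : ℕ} (M : Matrix (Fin (k + 1)) (Fin (k + 1)) R) :
    M.adjugateIdeal
      = Ideal.span {r | ∃ i j : Fin (k + 1), r = (M.submatrix i.succAbove j.succAbove).det} := by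
  refine le_antisymm (Ideal.span_le.2 ?_) (Ideal.span_le.2 ?_)
  · rintro _ ⟨i, j, rfl⟩
    rw [adjugate_fin_succ_eq_det_submatrix]
    exact Ideal.mul_mem_left _ _ (Ideal.subset_span ⟨j, i, rfl⟩)
  · rintro _ ⟨i, j, rfl⟩
    have hminor : (M.submatrix i.succAbove j.succAbove).det
        = (-1) ^ (i + j : ℕ) * M.adjugate j i := by
      rw [adjugate_fin_succ_eq_det_submatrix, ← mul_assoc, ← pow_add, Even.neg_one_pow ⟨_, rfl⟩,
        one_mul]
    rw [SetLike.mem_coe, hminor]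
    exact Ideal.mul_mem_left _ _ (adjugate_mem_adjugateIdeal M j i)

theorem adjugateIdeal_fromBlocks_of_invertible (A : Matrix m m R) (B : Matrix m n R)
    (C : Matrix n m R) (D : Matrix n n R) [Invertible A] :
    (fromBlocks A B C D).adjugateIdeal
      = (fromBlocks (1 : Matrix m m R) 0 0 (D - C * ⅟A * B)).adjugateIdeal := by
  have hdiag : fromBlocks A 0 0 (D - C * ⅟A * B)
      = fromBlocks A 0 0 (1 : Matrix n n R) * fromBlocks 1 0 0 (D - C * ⅟A * B) := by
    simp [fromBlocks_multiply]
  rw [fromBlocks_eq_of_invertible₁₁, hdiag,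
    adjugateIdeal_mul_of_isUnit_right _ (isUnit_fromBlocks_zero₂₁.2 ⟨isUnit_one, isUnit_one⟩),
    Matrix.mul_assoc,
    adjugateIdeal_mul_of_isUnit_left (isUnit_fromBlocks_zero₁₂.2 ⟨isUnit_one, isUnit_one⟩),
    adjugateIdeal_mul_of_isUnit_left
      (isUnit_fromBlocks_zero₁₂.2 ⟨isUnit_of_invertible A, isUnit_one⟩)]

theorem adjugateIdeal_fromBlocks_one_fin_two (S : Matrix (Fin 2) (Fin 2) R) :
    (fromBlocks (1 : Matrix (Fin 2) (Fin 2) R) 0 0 S).adjugateIdeal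
      = Ideal.span {S 0 0, S 0 1, S 1 0, S 1 1} := by
  set I := Ideal.span {S 0 0, S 0 1, S 1 0, S 1 1}
  have hblocks : reindex finSumFinEquiv finSumFinEquiv (fromBlocks 1 0 0 S)
      = !![1, 0, 0, 0; 0, 1, 0, 0; 0, 0, S 0 0, S 0 1; 0, 0, S 1 0, S 1 1] := by
    ext i j; fin_cases i <;> fin_cases j <;> rfl
  have hS : ∀ k l, S k l ∈ I := by
    intro k l; fin_cases k <;> fin_cases l <;> exact Ideal.subset_span (by simp)
  have hdet : S 0 0 * S 1 1 - S 0 1 * S 1 0 ∈ I :=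
    sub_mem (Ideal.mul_mem_left _ _ (hS 1 1)) (Ideal.mul_mem_left _ _ (hS 1 0))
  rw [← adjugateIdeal_reindex finSumFinEquiv, hblocks, adjugateIdeal_eq_span_det_submatrix]
  refine le_antisymm (Ideal.span_le.2 ?_) (Ideal.span_le.2 ?_)
  · rintro _ ⟨i, j, rfl⟩
    fin_cases i <;> fin_cases j <;> simp [det_fin_three, Fin.succAbove, hS, hdet]
  · rintro _ (rfl | rfl | rfl | rfl)
    · exact Ideal.subset_span ⟨3, 3, by simp [det_fin_three, Fin.succAbove]⟩
    · exact Ideal.subset_span ⟨3, 2, by simp [det_fin_three, Fin.succAbove]⟩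
    · exact Ideal.subset_span ⟨2, 3, by simp [det_fin_three, Fin.succAbove]⟩
    · exact Ideal.subset_span ⟨2, 2, by simp [det_fin_three, Fin.succAbove]⟩

theorem det_mul_schur_apply (A B C D : Matrix (Fin 2) (Fin 2) R) [Invertible A] (i j : Fin 2) :
    A.det * (D - C * ⅟A * B) i j
      = det !![A 0 0, A 0 1, B 0 j; A 1 0, A 1 1, B 1 j; C i 0, C i 1, D i j] := by
  have : Invertible A.det := detInvertibleOfInvertible A
  have h : A.det * ⅟A.det = 1 := mul_invOf_self _
  rw [invOf_eq]
  generalize ⅟A.det = e at h ⊢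
  rw [adjugate_fin_two, det_fin_three, det_fin_two] at *
  simp only [smul_of, smul_cons, smul_eq_mul, mul_neg, smul_empty, sub_apply, mul_apply, of_apply,
    cons_val', cons_val_fin_one, Fin.sum_univ_two, cons_val_zero, cons_val_one, cons_val]
  linear_combination
    (C i 0 * (A 0 1 * B 1 j - A 1 1 * B 0 j) + C i 1 * (A 1 0 * B 0 j - A 0 0 * B 1 j)) * h

end Matrix

theorem ideal_of_three_minors_eq
    (R : Type*) [CommRing R] (A B C D : Matrix (Fin 2) (Fin 2) R)
    (hA : IsUnit A.det)
    (M : Matrix (Fin 4) (Fin 4) R)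
    (hM : M = !![A 0 0, A 0 1, B 0 0, B 0 1;
                 A 1 0, A 1 1, B 1 0, B 1 1;
                 C 0 0, C 0 1, D 0 0, D 0 1;
                 C 1 0, C 1 1, D 1 0, D 1 1]) :
    Ideal.span {r : R | ∃ i j : Fin 4, r = minor4 M i j}
      = Ideal.span {minor4 M 3 3, minor4 M 3 2, minor4 M 2 3, minor4 M 2 2} := by
  let _ : Invertible A := A.invertibleOfIsUnitDet hA
  set S := D - C * ⅟A * B
  have hblocks : M = reindex finSumFinEquiv finSumFinEquiv (fromBlocks A B C D) := by
    subst hM; ext i j; fin_cases i <;> fin_cases j <;> rfl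
  have hminors : ({minor4 M 3 3, minor4 M 3 2, minor4 M 2 3, minor4 M 2 2} : Set R)
      = A.det • {S 0 0, S 0 1, S 1 0, S 1 1} := by
    simp only [Set.smul_set_insert, Set.smul_set_singleton, smul_eq_mul, S, det_mul_schur_apply]
    subst hM
    simp [minor4, det_fin_three, Fin.succAbove]
  calc Ideal.span {r : R | ∃ i j : Fin 4, r = minor4 M i j}
      = M.adjugateIdeal := (adjugateIdeal_eq_span_det_submatrix M).symm
    _ = (fromBlocks (1 : Matrix (Fin 2) (Fin 2) R) 0 0 S).adjugateIdeal := by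
      rw [hblocks, adjugateIdeal_reindex, adjugateIdeal_fromBlocks_of_invertible]
    _ = Ideal.span {S 0 0, S 0 1, S 1 0, S 1 1} := adjugateIdeal_fromBlocks_one_fin_two S
    _ = Ideal.span {minor4 M 3 3, minor4 M 3 2, minor4 M 2 3, minor4 M 2 2} := by
      rw [hminors]; exact (Submodule.span_smul_eq_of_isUnit _ _ hA).symm
end
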